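/- In the configuration model for d-regular multigraphs on N vertices (Nd even), let h(t) denote the number of pairs (s,e) of the configuration ψ(t) that cross a fixed boundary b (i.e., s ≤ b < e). If two tuples t, t' ∈ Π differ in exactly one coordinate, then |h(t) − h(t')| ≤ 2. -/

import Mathlib

/-!
Because half-edges are paired in increasing order, a step depends on the boundary only through
the number `k` of remaining half-edges `≤ b`: the smallest one lies below iff `0 < k`, and the
`t`-th smallest lies below iff `t < k`. So the crossing count is a function of `k` and the
choices, and it moves by at most one when `k` does. Changing one choice changes the indicator
of that step by at most one and the next value of `k` by at most one, hence the count by at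
most two.
-/

/-- The sequential pairing procedure of the configuration model: given the set `U` of
remaining half-edges and a list of choices, repeatedly pair the smallest remaining
half-edge `u₀` with the `t`-th smallest remaining half-edge and remove both. -/
def buildMatching : Finset ℕ → List ℕ → List (ℕ × ℕ)
  | _, [] => []
  | U, t :: ts =>
    let sorted := U.sort (· ≤ ·)
    let u0 := sorted.getD 0 0
    let e := sorted.getD t 0
    (u0, e) :: buildMatching ((U.erase u0).erase e) ts

/-- Number of pairs of the configuration `ψ(t)` on half-edges `{0, …, Nd−1}` crossing the
boundary `b`, i.e. pairs `(s, e)` with `s ≤ b < e`. -/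
def crossCount (N d b : ℕ) (ts : List ℕ) : ℕ :=
  ((buildMatching (Finset.range (N * d)) ts).filter fun q => q.1 ≤ b ∧ b < q.2).length

open Finset

theorem List.Pairwise.getElem_le_iff_lt_countP {α : Type*} [Preorder α] [DecidableLE α]
    {L : List α} (hL : L.Pairwise (· ≤ ·)) (b : α) {i : ℕ} (hi : i < L.length) :
    L[i] ≤ b ↔ i < L.countP (· ≤ b) := by
  induction L generalizing i with
  | nil => simp at hi
  | cons x L ih =>
    obtain ⟨hxL, hL⟩ := List.pairwise_cons.mp hL
    by_cases hx : x ≤ b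
    · cases i with
      | zero => simp [hx]
      | succ i => simp [hx, ih hL (Nat.lt_of_succ_lt_succ hi)]
    · have hnone : ∀ y ∈ L, ¬ y ≤ b := fun y hy hyb => hx ((hxL y hy).trans hyb)
      have hi' : ¬ (x :: L)[i] ≤ b := by
        cases i with
        | zero => exact hx
        | succ i => exact hnone _ (List.getElem_mem _)
      have hzero : L.countP (· ≤ b) = 0 := List.countP_eq_zero.mpr (by simpa using hnone)
      simp [hx, hi', hzero]

theorem Finset.sort_getElem_le_iff_lt_card_filter {α : Type*} [LinearOrder α] (U : Finset α)
    (b : α) {i : ℕ} (hi : i < (U.sort (· ≤ ·)).length) :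
    (U.sort (· ≤ ·))[i] ≤ b ↔ i < #{x ∈ U | x ≤ b} := by
  rw [(U.pairwise_sort _).getElem_le_iff_lt_countP b hi, ← Multiset.coe_countP, U.sort_eq,
    Multiset.countP_eq_card_filter]
  rfl

theorem List.ofFn_eq_set_ofFn_of_forall_ne {α : Type*} {n : ℕ} {f g : Fin n → α} {l : Fin n}
    (h : ∀ r, r ≠ l → f r = g r) : List.ofFn g = (List.ofFn f).set l (g l) := by
  refine List.ext_getElem (by simp) fun i _ _ => ?_
  simp only [List.getElem_ofFn, List.getElem_set]
  split_ifs with hi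
  · subst hi; rfl
  · exact (h _ (Fin.ne_of_val_ne (Ne.symm hi))).symm

/- `crossingsFrom k ts` counts the crossing pairs produced by the choices `ts` when `k` of the
remaining half-edges lie at or below the boundary, and `nextBelow k t` is that number after the
step with choice `t` (for `k = 0` the truncated `k - 1` is the correct `0`). -/
def nextBelow (k t : ℕ) : ℕ := if t < k then k - 2 else k - 1

def crossingsFrom : ℕ → List ℕ → ℕ
  | _, [] => 0
  | k, t :: ts => (if 0 < k ∧ k ≤ t then 1 else 0) + crossingsFrom (nextBelow k t) ts

theorem nextBelow_le_nextBelow_add_one (k t y : ℕ) : nextBelow k t ≤ nextBelow k y + 1 := by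
  unfold nextBelow; split_ifs <;> omega

theorem crossingsFrom_le_add_one {j k : ℕ} (hjk : j ≤ k + 1) (hkj : k ≤ j + 1) (ts : List ℕ) :
    crossingsFrom j ts ≤ crossingsFrom k ts + 1 := by
  induction ts generalizing j k with
  | nil => simp [crossingsFrom]
  | cons t ts ih =>
    have hnext : nextBelow j t = nextBelow k t ∨ ((0 < j ∧ j ≤ t ↔ 0 < k ∧ k ≤ t) ∧
        nextBelow j t ≤ nextBelow k t + 1 ∧ nextBelow k t ≤ nextBelow j t + 1) := by
      unfold nextBelow; split_ifs <;> omega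
    simp only [crossingsFrom]
    rcases hnext with heq | ⟨hsame, hle, hge⟩
    · rw [heq]
      split_ifs <;> omega
    · have hrest := ih hle hge
      simp only [hsame]
      omega

theorem abs_crossingsFrom_sub_set_le (k : ℕ) (ts : List ℕ) (i y : ℕ) :
    |(crossingsFrom k ts : ℤ) - crossingsFrom k (ts.set i y)| ≤ 2 := by
  induction ts generalizing k i with
  | nil => simp
  | cons t ts ih =>
    cases i with
    | zero =>
      simp only [List.set_cons_zero, crossingsFrom]
      have h₁ := crossingsFrom_le_add_one (nextBelow_le_nextBelow_add_one k t y)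
        (nextBelow_le_nextBelow_add_one k y t) ts
      have h₂ := crossingsFrom_le_add_one (nextBelow_le_nextBelow_add_one k y t)
        (nextBelow_le_nextBelow_add_one k t y) ts
      rw [abs_le]
      constructor <;> split_ifs <;> omega
    | succ i =>
      simpa only [List.set_cons_succ, crossingsFrom, Nat.cast_add, add_sub_add_left_eq_sub]
        using ih _ i

theorem length_filter_buildMatching_eq_crossingsFrom (b : ℕ) (U : Finset ℕ) (ts : List ℕ)
    (hts : ∀ i (h : i < ts.length), 1 ≤ ts[i] ∧ ts[i] < #U - 2 * i) :
    ((buildMatching U ts).filter fun q => q.1 ≤ b ∧ b < q.2).length =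
      crossingsFrom #{x ∈ U | x ≤ b} ts := by
  induction ts generalizing U with
  | nil => simp [buildMatching, crossingsFrom]
  | cons t ts ih =>
    obtain ⟨ht₁, ht₂⟩ : 1 ≤ t ∧ t < #U := hts 0 (by simp)
    set L := U.sort (· ≤ ·)
    set k := #{x ∈ U | x ≤ b}
    have hlen : L.length = #U := U.length_sort _
    have h₀ : 0 < L.length := by omega
    have hₜ : t < L.length := by omega
    have hlt : L[0] < L[t] :=
      U.sortedLT_sort.strictMono_get (a := ⟨0, h₀⟩) (b := ⟨t, hₜ⟩) (Fin.mk_lt_mk.mpr (by omega))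
    have hmem₀ : L[0] ∈ U := (U.mem_sort _).mp (List.getElem_mem h₀)
    have hmemₜ : L[t] ∈ U := (U.mem_sort _).mp (List.getElem_mem hₜ)
    have hle₀ : L[0] ≤ b ↔ 0 < k := U.sort_getElem_le_iff_lt_card_filter b h₀
    have hleₜ : L[t] ≤ b ↔ t < k := U.sort_getElem_le_iff_lt_card_filter b hₜ
    set V := (U.erase L[0]).erase L[t]
    have hstep : buildMatching U (t :: ts) = (L[0], L[t]) :: buildMatching V ts := by
      rw [buildMatching, List.getD_eq_getElem _ _ h₀, List.getD_eq_getElem _ _ hₜ]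
    have hcross : L[0] ≤ b ∧ b < L[t] ↔ 0 < k ∧ k ≤ t := by
      rw [hle₀, lt_iff_not_ge (b := L[t]), hleₜ, not_lt]
    have hcard : #V = #U - 2 := by
      rw [card_erase_of_mem (mem_erase.mpr ⟨hlt.ne', hmemₜ⟩), card_erase_of_mem hmem₀]; omega
    have hbelow : #{x ∈ V | x ≤ b} = nextBelow k t := by
      rw [filter_erase, filter_erase, card_erase_eq_ite, card_erase_eq_ite]
      simp only [mem_erase, mem_filter, hlt.ne', hmem₀, hmemₜ, hle₀, hleₜ, ne_eq,
        not_false_eq_true, true_and, nextBelow]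
      split_ifs <;> omega
    have hrest := ih V fun i hi => by
      have := hts (i + 1) (by simpa using hi)
      simp only [List.getElem_cons_succ] at this
      omega
    rw [hstep, List.filter_cons, crossingsFrom, ← hbelow, ← hrest]
    simp only [decide_eq_true_eq, hcross]
    split_ifs <;> simp [add_comm]

theorem stmt9_general (N d η : ℕ) (b : ℕ)
    (t t' : Fin η → ℕ)
    (ht : ∀ r : Fin η, 1 ≤ t r ∧ t r ≤ N * d - 2 * r.val - 1)
    (ht' : ∀ r : Fin η, 1 ≤ t' r ∧ t' r ≤ N * d - 2 * r.val - 1)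
    (l : Fin η) (hdiff : ∀ r, r ≠ l → t r = t' r) :
    |(crossCount N d b (List.ofFn t) : ℤ) - (crossCount N d b (List.ofFn t') : ℤ)| ≤ 2 := by
  have hchoices (f : Fin η → ℕ) (hf : ∀ r : Fin η, 1 ≤ f r ∧ f r ≤ N * d - 2 * r.val - 1)
      (i : ℕ) (hi : i < (List.ofFn f).length) :
      1 ≤ (List.ofFn f)[i] ∧ (List.ofFn f)[i] < #(range (N * d)) - 2 * i := by
    have := hf ⟨i, by simpa using hi⟩
    simp only [List.getElem_ofFn, card_range] at this ⊢
    omega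
  unfold crossCount
  rw [length_filter_buildMatching_eq_crossingsFrom b _ _ (hchoices t ht),
    length_filter_buildMatching_eq_crossingsFrom b _ _ (hchoices t' ht'),
    List.ofFn_eq_set_ofFn_of_forall_ne hdiff]
  exact abs_crossingsFrom_sub_set_le _ _ _ _

/-- If two choice tuples `t, t' ∈ Π` of the configuration model differ in at most one
coordinate `l`, then the numbers of pairs crossing a fixed boundary `b` differ by at most 2. -/
theorem stmt9 (N d η : ℕ) (hη : 2 * η = N * d) (b : ℕ)
    (t t' : Fin η → ℕ)
    (ht : ∀ r : Fin η, 1 ≤ t r ∧ t r ≤ N * d - 2 * r.val - 1)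
    (ht' : ∀ r : Fin η, 1 ≤ t' r ∧ t' r ≤ N * d - 2 * r.val - 1)
    (l : Fin η) (hdiff : ∀ r, r ≠ l → t r = t' r) :
    |(crossCount N d b (List.ofFn t) : ℤ) - (crossCount N d b (List.ofFn t') : ℤ)| ≤ 2 :=
  stmt9_general N d η b t t' ht ht' l hdiff
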